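/- Let ξ ∈ ℝ³ with ξ ≠ 0, s = |ξ|, ω = ξ/|ξ|, and let D₂(ξ) be the linear operator on (ℂ³_ξ)³ defined by D₂(ξ)(Z, X, Y) = (X, −Z + iξ × Y, −iξ × X). Then: (1) every eigenvalue of D₂(ξ) lies in {0, i√(1+s²), −i√(1+s²)}; (2) for every W ∈ ℂ³ with W·ω = 0 one has D₂(ξ)(isW, 0, −ω × W) = 0; and (3) for η = i√(1+s²) or η = −i√(1+s²) and every W ∈ ℂ³ with W·ω = 0, one has D₂(ξ)(W, ηW, −is ω × W) = η·(W, ηW, −is ω × W). -/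

import Mathlib

/-!
On vectors orthogonal to `ξ` the double cross product is `ξ × (ξ × Z) = -|ξ|² Z`. For an
eigenvector `(Z, X, Y)` with eigenvalue `η ≠ 0` the equations give `X = ηZ` and `ηY = -iξ × X`,
and multiplying the middle one by `η` turns it into `η(η² + 1 + |ξ|²)Z = 0` with `Z ≠ 0`. The
explicit (eigen)vectors of (2) and (3) are checked with the same double cross product identity.
-/

noncomputable section

/-- The cross product `a × b` of a real vector `a ∈ ℝ³` with a complex vector `b ∈ ℂ³`,
taken componentwise. -/
def crossRC3 (a : EuclideanSpace ℝ (Fin 3)) (b : Fin 3 → ℂ) : Fin 3 → ℂ :=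
  ![(a 1 : ℂ) * b 2 - (a 2 : ℂ) * b 1,
    (a 2 : ℂ) * b 0 - (a 0 : ℂ) * b 2,
    (a 0 : ℂ) * b 1 - (a 1 : ℂ) * b 0]

/-- The operator `D₂(ξ)(Z, X, Y) = (X, −Z + iξ × Y, −iξ × X)`. -/
def D2op (ξ : EuclideanSpace ℝ (Fin 3)) (u : (Fin 3 → ℂ) × (Fin 3 → ℂ) × (Fin 3 → ℂ)) :
    (Fin 3 → ℂ) × (Fin 3 → ℂ) × (Fin 3 → ℂ) :=
  (u.2.1, -u.1 + Complex.I • crossRC3 ξ u.2.2, -(Complex.I • crossRC3 ξ u.2.1))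

section CrossProduct

variable (a : EuclideanSpace ℝ (Fin 3))

@[simp]
lemma crossRC3_zero : crossRC3 a 0 = 0 := by
  funext j; fin_cases j <;> simp [crossRC3]

lemma crossRC3_smul (c : ℂ) (b : Fin 3 → ℂ) : crossRC3 a (c • b) = c • crossRC3 a b := by
  funext j; fin_cases j <;> simp [crossRC3] <;> ring

@[simp]
lemma crossRC3_neg (b : Fin 3 → ℂ) : crossRC3 a (-b) = -crossRC3 a b := by
  funext j; fin_cases j <;> simp [crossRC3] <;> ring

lemma real_smul_crossRC3 (r : ℝ) (b : Fin 3 → ℂ) :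
    crossRC3 (r • a) b = (r : ℂ) • crossRC3 a b := by
  funext j; fin_cases j <;> simp [crossRC3] <;> ring

lemma norm_sq_eq_sum_three : (‖a‖ : ℂ) ^ 2 = (a 0 : ℂ) ^ 2 + (a 1 : ℂ) ^ 2 + (a 2 : ℂ) ^ 2 := by
  have h : ‖a‖ ^ 2 = a 0 ^ 2 + a 1 ^ 2 + a 2 ^ 2 := by
    simp [EuclideanSpace.real_norm_sq_eq, Fin.sum_univ_three]
  exact_mod_cast congrArg Complex.ofReal h

lemma crossRC3_crossRC3_of_orthogonal {b : Fin 3 → ℂ} (hb : ∑ i, b i * (a i : ℂ) = 0) :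
    crossRC3 a (crossRC3 a b) = -((‖a‖ : ℂ) ^ 2) • b := by
  have ha := norm_sq_eq_sum_three a
  rw [Fin.sum_univ_three] at hb
  funext j
  fin_cases j <;> simp [crossRC3]
  · linear_combination b 0 * ha + (a 0 : ℂ) * hb
  · linear_combination b 1 * ha + (a 1 : ℂ) * hb
  · linear_combination b 2 * ha + (a 2 : ℂ) * hb

lemma orthogonal_of_orthogonal_normalize {b : Fin 3 → ℂ}
    (hb : ∑ i, b i * (((‖a‖⁻¹ • a : EuclideanSpace ℝ (Fin 3)) i : ℝ) : ℂ) = 0) :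
    ∑ i, b i * (a i : ℂ) = 0 := by
  rcases eq_or_ne a 0 with rfl | ha
  · simp
  have hb' : (‖a‖⁻¹ : ℂ) * ∑ i, b i * (a i : ℂ) = 0 := by
    rw [← hb, Finset.mul_sum]
    congr 1 with i
    simp only [PiLp.smul_apply, smul_eq_mul, Complex.ofReal_mul, Complex.ofReal_inv]
    ring
  simpa [ha] using hb'

lemma norm_smul_crossRC3_normalize (b : Fin 3 → ℂ) :
    (‖a‖ : ℂ) • crossRC3 (‖a‖⁻¹ • a) b = crossRC3 a b := by
  have ha : ‖a‖ • ‖a‖⁻¹ • a = a := by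
    rcases eq_or_ne a 0 with rfl | ha
    · simp
    · simp [ha]
  rw [← real_smul_crossRC3, ha]

lemma crossRC3_crossRC3_normalize_of_orthogonal {b : Fin 3 → ℂ}
    (hb : ∑ i, b i * (((‖a‖⁻¹ • a : EuclideanSpace ℝ (Fin 3)) i : ℝ) : ℂ) = 0) :
    crossRC3 a (crossRC3 (‖a‖⁻¹ • a) b) = -(‖a‖ : ℂ) • b := by
  rw [real_smul_crossRC3, crossRC3_smul,
    crossRC3_crossRC3_of_orthogonal a (orthogonal_of_orthogonal_normalize a hb), smul_smul]
  rcases eq_or_ne a 0 with rfl | ha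
  · simp
  · have ha' : (‖a‖ : ℂ) ≠ 0 := by exact_mod_cast norm_ne_zero_iff.mpr ha
    congr 1
    push_cast
    field_simp

end CrossProduct

lemma I_mul_sqrt_sq {r : ℝ} (hr : 0 ≤ r) :
    (Complex.I * (Real.sqrt r : ℝ)) ^ 2 = -(r : ℂ) := by
  rw [mul_pow, Complex.I_sq, ← Complex.ofReal_pow, Real.sq_sqrt hr, neg_one_mul]

lemma eq_or_eq_neg_I_mul_sqrt_iff {r : ℝ} (hr : 0 ≤ r) (η : ℂ) :
    (η = Complex.I * (Real.sqrt r : ℝ) ∨ η = -(Complex.I * (Real.sqrt r : ℝ))) ↔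
      η ^ 2 = -(r : ℂ) := by
  rw [← I_mul_sqrt_sq hr, sq_eq_sq_iff_eq_or_eq_neg]

lemma sq_eq_of_D2op_eq_smul (ξ : EuclideanSpace ℝ (Fin 3)) {η : ℂ} {Z X Y : Fin 3 → ℂ}
    (hZ : ∑ i, Z i * (ξ i : ℂ) = 0) (hne : (Z, X, Y) ≠ 0) (hη : η ≠ 0)
    (hD : D2op ξ (Z, X, Y) = η • (Z, X, Y)) :
    η ^ 2 = -((1 + ‖ξ‖ ^ 2 : ℝ) : ℂ) := by
  simp only [D2op, Prod.smul_mk, Prod.mk.injEq] at hD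
  obtain ⟨hX, hmid, hY⟩ := hD
  have hZ0 : Z ≠ 0 := by
    rintro rfl
    have hX0 : X = 0 := by simp [hX]
    have hY0 : Y = 0 := by simpa [hX0, hη, eq_comm] using hY
    exact hne (by simp [hX0, hY0])
  have hηY : η • Y = (-Complex.I * η) • crossRC3 ξ Z := by
    rw [← hY, hX, crossRC3_smul, smul_smul, neg_mul, neg_smul]
  have key : (η * (η ^ 2 + 1 + (‖ξ‖ : ℂ) ^ 2)) • Z = 0 := by
    have hmid' : η • (-Z + Complex.I • crossRC3 ξ Y) = η • η • η • Z := by rw [hmid, hX]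
    rw [smul_add, smul_neg, smul_comm η Complex.I, ← crossRC3_smul, hηY, crossRC3_smul,
      crossRC3_crossRC3_of_orthogonal ξ hZ] at hmid'
    linear_combination (norm := module) -hmid' + (η * (‖ξ‖ : ℂ) ^ 2 * Complex.I_sq) • Z
  have hfac := (smul_eq_zero.mp key).resolve_right hZ0
  push_cast
  linear_combination (mul_eq_zero.mp hfac).resolve_left hη

theorem stmt3_general (ξ : EuclideanSpace ℝ (Fin 3)) :
    (∀ η : ℂ, ∀ Z X Y : Fin 3 → ℂ,
      (∑ i, Z i * (ξ i : ℂ)) = 0 → (∑ i, X i * (ξ i : ℂ)) = 0 → (∑ i, Y i * (ξ i : ℂ)) = 0 →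
      (Z, X, Y) ≠ (0 : (Fin 3 → ℂ) × (Fin 3 → ℂ) × (Fin 3 → ℂ)) →
      D2op ξ (Z, X, Y) = η • (Z, X, Y) →
      (η = 0 ∨ η = Complex.I * (Real.sqrt (1 + ‖ξ‖^2) : ℝ) ∨
        η = -(Complex.I * (Real.sqrt (1 + ‖ξ‖^2) : ℝ)))) ∧
    (∀ W : Fin 3 → ℂ, (∑ i, W i * (((‖ξ‖⁻¹ • ξ : EuclideanSpace ℝ (Fin 3)) i : ℝ) : ℂ)) = 0 →
      D2op ξ ((Complex.I * (‖ξ‖ : ℝ)) • W, 0, -(crossRC3 (‖ξ‖⁻¹ • ξ) W)) = 0) ∧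
    (∀ η : ℂ, (η = Complex.I * (Real.sqrt (1 + ‖ξ‖^2) : ℝ) ∨
        η = -(Complex.I * (Real.sqrt (1 + ‖ξ‖^2) : ℝ))) →
      ∀ W : Fin 3 → ℂ, (∑ i, W i * (((‖ξ‖⁻¹ • ξ : EuclideanSpace ℝ (Fin 3)) i : ℝ) : ℂ)) = 0 →
      D2op ξ (W, η • W, (-(Complex.I * (‖ξ‖ : ℝ))) • crossRC3 (‖ξ‖⁻¹ • ξ) W)
        = η • (W, η • W, (-(Complex.I * (‖ξ‖ : ℝ))) • crossRC3 (‖ξ‖⁻¹ • ξ) W)) := by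
  have hr : (0 : ℝ) ≤ 1 + ‖ξ‖ ^ 2 := by positivity
  refine ⟨?_, ?_, ?_⟩
  · intro η Z X Y hZ _ _ hne hD
    by_cases hη : η = 0
    · exact Or.inl hη
    · exact Or.inr <|
        (eq_or_eq_neg_I_mul_sqrt_iff hr η).mpr (sq_eq_of_D2op_eq_smul ξ hZ hne hη hD)
  · intro W hW
    have hcross := crossRC3_crossRC3_normalize_of_orthogonal ξ hW
    simp only [D2op, crossRC3_neg, hcross, crossRC3_zero, smul_zero, neg_zero, Prod.mk_eq_zero]
    refine ⟨trivial, ?_, trivial⟩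
    module
  · intro η hη W hW
    have hcross := crossRC3_crossRC3_normalize_of_orthogonal ξ hW
    have hη2 := (eq_or_eq_neg_I_mul_sqrt_iff hr η).mp hη
    simp only [D2op, Prod.smul_mk, Prod.mk.injEq, crossRC3_smul, hcross]
    refine ⟨trivial, ?_, ?_⟩
    · linear_combination (norm := module) (-hη2 + (‖ξ‖ : ℂ) ^ 2 * Complex.I_sq) • W
    · rw [← norm_smul_crossRC3_normalize ξ W]
      module

theorem stmt3 (ξ : EuclideanSpace ℝ (Fin 3)) (hξ : ξ ≠ 0) :
    (∀ η : ℂ, ∀ Z X Y : Fin 3 → ℂ,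
      (∑ i, Z i * (ξ i : ℂ)) = 0 → (∑ i, X i * (ξ i : ℂ)) = 0 → (∑ i, Y i * (ξ i : ℂ)) = 0 →
      (Z, X, Y) ≠ (0 : (Fin 3 → ℂ) × (Fin 3 → ℂ) × (Fin 3 → ℂ)) →
      D2op ξ (Z, X, Y) = η • (Z, X, Y) →
      (η = 0 ∨ η = Complex.I * (Real.sqrt (1 + ‖ξ‖^2) : ℝ) ∨
        η = -(Complex.I * (Real.sqrt (1 + ‖ξ‖^2) : ℝ)))) ∧
    (∀ W : Fin 3 → ℂ, (∑ i, W i * (((‖ξ‖⁻¹ • ξ : EuclideanSpace ℝ (Fin 3)) i : ℝ) : ℂ)) = 0 →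
      D2op ξ ((Complex.I * (‖ξ‖ : ℝ)) • W, 0, -(crossRC3 (‖ξ‖⁻¹ • ξ) W)) = 0) ∧
    (∀ η : ℂ, (η = Complex.I * (Real.sqrt (1 + ‖ξ‖^2) : ℝ) ∨
        η = -(Complex.I * (Real.sqrt (1 + ‖ξ‖^2) : ℝ))) →
      ∀ W : Fin 3 → ℂ, (∑ i, W i * (((‖ξ‖⁻¹ • ξ : EuclideanSpace ℝ (Fin 3)) i : ℝ) : ℂ)) = 0 →
      D2op ξ (W, η • W, (-(Complex.I * (‖ξ‖ : ℝ))) • crossRC3 (‖ξ‖⁻¹ • ξ) W)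
        = η • (W, η • W, (-(Complex.I * (‖ξ‖ : ℝ))) • crossRC3 (‖ξ‖⁻¹ • ξ) W)) :=
  stmt3_general ξ
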